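/- For every integer n ≥ 1, the sum of all entries of the matrix C_n equals the n-th Catalan number: Σ_{i=1}^{n} Σ_{j=1}^{n} c^{(n)}_{i,j} = (1/(n+1))·binom(2n, n). -/

import Mathlib

/-- The entries `c^{(n)}_{i,j}` of the matrices `C_n`, defined by `C_1 = (1)` and
`C_{n+1} = (τ C_n) ⊕ (1)`, where `(τ A)_{i,j} = Σ_{s=i-1}^{n} a_{s,j}` (with the
convention `a_{0,j} = 0`). Entries with an index outside `{1, …, n}` are `0`. -/
def cMat : ℕ → ℕ → ℕ → ℕ
  | 0, _, _ => 0
  | 1, i, j => if i = 1 ∧ j = 1 then 1 else 0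
  | n + 2, i, j =>
      if 1 ≤ i ∧ i ≤ n + 1 ∧ 1 ≤ j ∧ j ≤ n + 1 then
        ∑ s ∈ Finset.Icc (i - 1) (n + 1), cMat (n + 1) s j
      else if i = n + 2 ∧ j = n + 2 then 1 else 0


/-!
Let `r_n(i)` be the `i`-th row sum of `C_n`. Summing the defining recursion over the columns
gives `r_{n+1}(i) = ∑_{s=i-1}^{n} r_n(s)` for `1 ≤ i ≤ n` and `r_{n+1}(n+1) = 1`; since
`r_n(0) = 0`, the total sum of `C_n` is the first row sum `r_{n+1}(1)`. These are the
partial-sum recurrences of Catalan's triangle `T(n, k) = binom(n+k, n) - binom(n+k, n+1)`, so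
`r_{n+1}(i) = T(n, n+1-i)`, and the total sum of `C_n` is `T(n, n)`, the `n`-th Catalan number.
-/

open Finset

def catalanTriangle (n k : ℕ) : ℕ := (n + k).choose n - (n + k).choose (n + 1)

lemma choose_add_succ_le_choose_add {n k : ℕ} (h : k ≤ n + 1) :
    (n + k).choose (n + 1) ≤ (n + k).choose n := by
  have key : (n + k).choose (n + 1) * (n + 1) = (n + k).choose n * k := by
    simpa using Nat.choose_succ_right_eq (n + k) n
  exact Nat.le_of_mul_le_mul_right (key ▸ Nat.mul_le_mul_left _ h) (Nat.add_one_pos n)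

lemma catalanTriangle_zero_right (n : ℕ) : catalanTriangle n 0 = 1 := by
  simp [catalanTriangle]

lemma catalanTriangle_succ_self (n : ℕ) : catalanTriangle n (n + 1) = 0 := by
  rw [catalanTriangle, Nat.choose_symm_add, Nat.sub_self]

lemma catalanTriangle_succ_succ {n m : ℕ} (h : m ≤ n) :
    catalanTriangle (n + 1) (m + 1) = catalanTriangle (n + 1) m + catalanTriangle n (m + 1) := by
  have h₁ : (n + 1 + m).choose (n + 1 + 1) ≤ (n + 1 + m).choose (n + 1) :=
    choose_add_succ_le_choose_add (by omega)
  have h₂ : (n + (m + 1)).choose (n + 1) ≤ (n + (m + 1)).choose n :=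
    choose_add_succ_le_choose_add (by omega)
  have pascal₁ := Nat.choose_succ_succ' (n + m + 1) n
  have pascal₂ := Nat.choose_succ_succ' (n + m + 1) (n + 1)
  unfold catalanTriangle
  rw [show n + 1 + (m + 1) = n + m + 1 + 1 by omega]
  rw [show n + 1 + m = n + m + 1 by omega] at h₁ ⊢
  rw [show n + (m + 1) = n + m + 1 by omega] at h₂ ⊢
  omega

lemma sum_range_catalanTriangle {n m : ℕ} (h : m ≤ n + 1) :
    ∑ k ∈ range (m + 1), catalanTriangle n k = catalanTriangle (n + 1) m := by
  induction m with
  | zero => simp [catalanTriangle_zero_right]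
  | succ m ih => rw [sum_range_succ, ih (by omega), catalanTriangle_succ_succ (by omega)]

lemma catalanTriangle_self (n : ℕ) : catalanTriangle n n = catalan n := by
  have key : (n + n).choose (n + 1) * (n + 1) = (n + n).choose n * n := by
    simpa using Nat.choose_succ_right_eq (n + n) n
  refine Nat.eq_of_mul_eq_mul_right (Nat.add_one_pos n) ?_
  rw [mul_comm (catalan n), succ_mul_catalan_eq_centralBinom, Nat.centralBinom_eq_two_mul_choose,
    two_mul, catalanTriangle, Nat.sub_mul, key, ← Nat.mul_sub, Nat.add_sub_cancel_left, mul_one]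

lemma cMat_zero_left (n j : ℕ) : cMat n 0 j = 0 := by
  rcases n with _ | _ | n <;> simp [cMat]

lemma cMat_succ_of_mem {n i j : ℕ} (hn : 1 ≤ n) (hi : i ∈ Icc 1 n) (hj : j ∈ Icc 1 n) :
    cMat (n + 1) i j = ∑ s ∈ Icc (i - 1) n, cMat n s j := by
  obtain ⟨n, rfl⟩ := Nat.exists_eq_add_of_le' hn
  rw [mem_Icc] at hi hj
  rw [cMat, if_pos (by omega)]

lemma cMat_succ_last_col {n i : ℕ} (hn : 1 ≤ n) (hi : i ≤ n) : cMat (n + 1) i (n + 1) = 0 := by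
  obtain ⟨n, rfl⟩ := Nat.exists_eq_add_of_le' hn
  rw [cMat, if_neg (by omega), if_neg (by omega)]

lemma cMat_self_left {n j : ℕ} (hn : 1 ≤ n) (hj : j ∈ Icc 1 n) :
    cMat n n j = if j = n then 1 else 0 := by
  rw [mem_Icc] at hj
  rcases n with _ | _ | n
  · omega
  · simp [cMat]
  · rw [cMat, if_neg (by omega)]
    simp

def cMatRowSum (n i : ℕ) : ℕ := ∑ j ∈ Icc 1 n, cMat n i j

lemma cMatRowSum_zero_right (n : ℕ) : cMatRowSum n 0 = 0 := by
  simp [cMatRowSum, cMat_zero_left]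

lemma cMatRowSum_self {n : ℕ} (hn : 1 ≤ n) : cMatRowSum n n = 1 := by
  rw [cMatRowSum, sum_congr rfl fun j hj => cMat_self_left hn hj, sum_ite_eq']
  simp [hn]

lemma cMatRowSum_succ {n i : ℕ} (hn : 1 ≤ n) (hi : i ∈ Icc 1 n) :
    cMatRowSum (n + 1) i = ∑ s ∈ Icc (i - 1) n, cMatRowSum n s := by
  rw [cMatRowSum, sum_Icc_succ_top (by omega), cMat_succ_last_col hn (mem_Icc.1 hi).2, add_zero,
    sum_congr rfl fun j hj => cMat_succ_of_mem hn hi hj, sum_comm]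
  rfl

lemma sum_cMatRowSum_eq_succ_one {n : ℕ} (hn : 1 ≤ n) :
    ∑ i ∈ Icc 1 n, cMatRowSum n i = cMatRowSum (n + 1) 1 := by
  rw [cMatRowSum_succ hn (by simp [hn]), Nat.sub_self, ← add_sum_Ioc_eq_sum_Icc (Nat.zero_le n),
    cMatRowSum_zero_right, zero_add]
  rfl

lemma cMatRowSum_eq_catalanTriangle {n i : ℕ} (hi : i ≤ n + 1) :
    cMatRowSum (n + 1) i = catalanTriangle n (n + 1 - i) := by
  induction n generalizing i with
  | zero =>
    interval_cases i
    · simp [cMatRowSum_zero_right, catalanTriangle_succ_self]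
    · simp [cMatRowSum_self, catalanTriangle_zero_right]
  | succ n ih =>
    rcases Nat.eq_zero_or_pos i with rfl | hi₀
    · rw [cMatRowSum_zero_right, Nat.sub_zero, catalanTriangle_succ_self]
    rcases hi.lt_or_eq with hi' | rfl
    · rw [cMatRowSum_succ (by omega) (mem_Icc.2 ⟨hi₀, by omega⟩),
        sum_congr rfl fun s hs => ih (mem_Icc.1 hs).2, ← Ico_add_one_right_eq_Icc,
        sum_Ico_reflect _ _ le_rfl, Nat.sub_self, ← range_eq_Ico,
        show n + 1 + 1 - (i - 1) = n + 1 + 1 - i + 1 by omega]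
      exact sum_range_catalanTriangle (by omega)
    · rw [cMatRowSum_self (by omega), Nat.sub_self, catalanTriangle_zero_right]

theorem cMat_sum_eq_catalan (n : ℕ) (hn : 1 ≤ n) :
    ∑ i ∈ Finset.Icc 1 n, ∑ j ∈ Finset.Icc 1 n, cMat n i j = (2 * n).choose n / (n + 1) := by
  rw [← Nat.centralBinom_eq_two_mul_choose, ← catalan_eq_centralBinom_div, ← catalanTriangle_self]
  calc ∑ i ∈ Icc 1 n, ∑ j ∈ Icc 1 n, cMat n i j = cMatRowSum (n + 1) 1 :=
        sum_cMatRowSum_eq_succ_one hn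
    _ = catalanTriangle n n := cMatRowSum_eq_catalanTriangle (by omega)
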